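/- arXiv:2011.00979 — 3 statements merged into one kernel-verified Lean document; each statement's English description precedes it below -/
import Mathlib

section
/- Let R and S be solid invertible (d+1)×(d+1) matrices over F. Then R and S are diagonally equivalent if and only if there exists an invertible matrix U such that U Δ_{ii} U^{-1} = Δ_{ii} and U (R Δ_{ii} R^{-1}) U^{-1} = S Δ_{ii} S^{-1} for all 0 ≤ i ≤ d. -/
open Matrix

/-- An invertible matrix is *solid* whenever all entries in row 0 and column 0
of both the matrix and its inverse are nonzero. -/
def Solid {F : Type} [Field F] {d : ℕ} (R : Matrix (Fin (d+1)) (Fin (d+1)) F) : Prop :=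
  IsUnit R ∧ (∀ i, R i 0 ≠ 0) ∧ (∀ j, R 0 j ≠ 0) ∧ (∀ i, R⁻¹ i 0 ≠ 0) ∧ (∀ j, R⁻¹ 0 j ≠ 0)

/-- Matrices `S`, `T` are *diagonally equivalent* whenever `T = H * S * K` for some
invertible diagonal matrices `H`, `K`. -/
def DiagEquiv {F : Type} [Field F] {d : ℕ} (S T : Matrix (Fin (d+1)) (Fin (d+1)) F) : Prop :=
  ∃ H K : Matrix (Fin (d+1)) (Fin (d+1)) F,
    H.IsDiag ∧ IsUnit H ∧ K.IsDiag ∧ IsUnit K ∧ T = H * S * K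

/-- A matrix is *normalized* whenever all entries of its column 0 equal 1, and all
entries of column 0 of its inverse are equal to each other. -/
def Normalized {F : Type} [Field F] {d : ℕ} (S : Matrix (Fin (d+1)) (Fin (d+1)) F) : Prop :=
  (∀ i, S i 0 = 1) ∧ (∀ i, S⁻¹ i 0 = S⁻¹ 0 0)

/-!
Conjugation by an invertible `U` fixes every `Δᵢᵢ` exactly when `U` commutes with all of them,
i.e. when `U` is diagonal. Likewise `U (R Δᵢᵢ R⁻¹) U⁻¹ = S Δᵢᵢ S⁻¹` for all `i` says that
`S⁻¹ U R` is diagonal. So the right-hand side says exactly that `S = U R K` with `U` and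
`K = (S⁻¹ U R)⁻¹` invertible diagonal.
-/

namespace Matrix

variable {n α : Type*} [Fintype n] [DecidableEq n]

theorem isDiag_iff_forall_commute_single [CommSemiring α] {M : Matrix n n α} :
    M.IsDiag ↔ ∀ i, Commute M (single i i 1) := by
  refine ⟨fun hM i => ?_, fun h _ k hjk => col_eq_zero_of_commute_single (h k).symm hjk⟩
  rw [← hM.diagonal_diag, ← diagonal_single]
  exact commute_diagonal _ _

theorem IsDiag.inv [CommRing α] {M : Matrix n n α} (hM : M.IsDiag) : M⁻¹.IsDiag := by
  rw [← hM.diagonal_diag, inv_diagonal]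
  exact isDiag_diagonal _

theorem conj_eq_self_iff_commute [CommRing α] {A N : Matrix n n α} (hA : IsUnit A) :
    A * N * A⁻¹ = N ↔ Commute A N := by
  lift A to (Matrix n n α)ˣ using hA
  rw [← coe_units_inv, Units.mul_inv_eq_iff_eq_mul]
  rfl

theorem conj_eq_conj_iff_commute [CommRing α] {A B N : Matrix n n α} (hA : IsUnit A)
    (hB : IsUnit B) : A * N * A⁻¹ = B * N * B⁻¹ ↔ Commute (B⁻¹ * A) N := by
  lift A to (Matrix n n α)ˣ using hA
  lift B to (Matrix n n α)ˣ using hB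
  simp only [← coe_units_inv]
  rw [Units.mul_inv_eq_iff_eq_mul, Commute, SemiconjBy]
  simp only [mul_assoc]
  rw [Units.inv_mul_eq_iff_eq_mul]

end Matrix

theorem diagEquiv_iff_exists_isDiag {F : Type} [Field F] {d : ℕ}
    {R S : Matrix (Fin (d+1)) (Fin (d+1)) F} (hR : IsUnit R) (hS : IsUnit S) :
    DiagEquiv R S ↔ ∃ H, IsUnit H ∧ H.IsDiag ∧ (S⁻¹ * (H * R)).IsDiag := by
  have hHR {H : Matrix (Fin (d+1)) (Fin (d+1)) F} (hH : IsUnit H) : IsUnit (H * R).det :=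
    (isUnit_iff_isUnit_det _).1 (hH.mul hR)
  constructor
  · rintro ⟨H, K, hH, hHu, hK, -, rfl⟩
    refine ⟨H, hHu, hH, ?_⟩
    rw [Matrix.mul_inv_rev, nonsing_inv_mul_cancel_right _ _ (hHR hHu)]
    exact hK.inv
  · rintro ⟨H, hHu, hH, hK⟩
    refine ⟨H, (S⁻¹ * (H * R))⁻¹, hH, hHu, hK.inv,
      isUnit_nonsing_inv_iff.2 ((isUnit_nonsing_inv_iff.2 hS).mul (hHu.mul hR)), ?_⟩
    rw [Matrix.mul_inv_rev, nonsing_inv_nonsing_inv _ ((isUnit_iff_isUnit_det _).1 hS),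
      ← mul_assoc, mul_nonsing_inv _ (hHR hHu), one_mul]

theorem stmt7 {F : Type} [Field F] (d : ℕ)
    (R S : Matrix (Fin (d+1)) (Fin (d+1)) F)
    (hR : Solid R) (hS : Solid S) :
    DiagEquiv R S ↔
      ∃ U : Matrix (Fin (d+1)) (Fin (d+1)) F, IsUnit U ∧
        ∀ i : Fin (d+1),
          U * single i i 1 * U⁻¹ = single i i 1 ∧
          U * (R * single i i 1 * R⁻¹) * U⁻¹ = S * single i i 1 * S⁻¹ := by
  rw [diagEquiv_iff_exists_isDiag hR.1 hS.1]
  refine exists_congr fun U => and_congr_right fun hU => ?_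
  simp only [forall_and, isDiag_iff_forall_commute_single, ← conj_eq_self_iff_commute hU,
    ← conj_eq_conj_iff_commute (hU.mul hR.1) hS.1, Matrix.mul_inv_rev, mul_assoc]
end

section
/- Let R be a solid invertible (d+1)×(d+1) matrix over F, and let H, K be invertible diagonal (d+1)×(d+1) matrices. Then H R K is normalized if and only if H_{rr} = 1/(R_{r,0} K_{0,0}) and K_{rr} = (R^{-1})_{r,0} K_{0,0} / (R^{-1})_{0,0} for all 0 ≤ r ≤ d. -/
/-!
Writing `H = diagonal h` and `K = diagonal k`, column 0 of `H * R * K` is `h r * R r 0 * k 0`, and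
column 0 of `(H * R * K)⁻¹ = K⁻¹ * R⁻¹ * H⁻¹` is `(k r)⁻¹ * R⁻¹ r 0 * (h 0)⁻¹`. The two conditions
of normalization are thus entrywise equations, which solve uniquely for `h r` and `k r`.
-/

open Matrix

namespace Matrix

variable {n α : Type*} [Fintype n] [DecidableEq n]

theorem diagonal_mul_mul_diagonal_apply [NonUnitalNonAssocSemiring α] (h k : n → α)
    (R : Matrix n n α) (i j : n) : (diagonal h * R * diagonal k) i j = h i * R i j * k j := by
  simp [mul_diagonal, diagonal_mul]

variable [Field α]

theorem inv_diagonal_of_ne_zero {v : n → α} (hv : ∀ i, v i ≠ 0) :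
    (diagonal v)⁻¹ = diagonal fun i ↦ (v i)⁻¹ :=
  inv_eq_left_inv <| by simp [diagonal_mul_diagonal, inv_mul_cancel₀ (hv _)]

theorem inv_diagonal_mul_mul_diagonal {h k : n → α} (hh : ∀ i, h i ≠ 0) (hk : ∀ i, k i ≠ 0)
    (R : Matrix n n α) :
    (diagonal h * R * diagonal k)⁻¹ =
      diagonal (fun i ↦ (k i)⁻¹) * R⁻¹ * diagonal fun i ↦ (h i)⁻¹ := by
  rw [mul_inv_rev, mul_inv_rev, inv_diagonal_of_ne_zero hh, inv_diagonal_of_ne_zero hk, mul_assoc]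

theorem IsDiag.apply_ne_zero_of_isUnit {H : Matrix n n α} (hH : H.IsDiag) (hHu : IsUnit H)
    (i : n) : H i i ≠ 0 := by
  rw [← hH.diagonal_diag, isUnit_diagonal, Pi.isUnit_iff] at hHu
  exact (hHu i).ne_zero

end Matrix

variable {F : Type} [Field F]

theorem mul_mul_eq_one_iff_eq_inv {a b c : F} (hb : b ≠ 0) (hc : c ≠ 0) :
    a * b * c = 1 ↔ a = (b * c)⁻¹ := by
  rw [mul_assoc, mul_eq_one_iff_eq_inv₀ (mul_ne_zero hb hc)]

theorem inv_mul_mul_inv_eq_inv_mul_mul_inv_iff {x y a b c : F} (hx : x ≠ 0) (hy : y ≠ 0)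
    (hb : b ≠ 0) (hc : c ≠ 0) :
    x⁻¹ * a * c⁻¹ = y⁻¹ * b * c⁻¹ ↔ x = a * y / b := by
  rw [mul_left_inj' (inv_ne_zero hc), eq_div_iff hb]
  field_simp
  exact eq_comm

theorem normalized_diagonal_mul_mul_diagonal_iff {d : ℕ} {R : Matrix (Fin (d+1)) (Fin (d+1)) F}
    (hR : ∀ i, R i 0 ≠ 0) (hR' : R⁻¹ 0 0 ≠ 0) {h k : Fin (d+1) → F} (hh : ∀ i, h i ≠ 0)
    (hk : ∀ i, k i ≠ 0) :
    Normalized (diagonal h * R * diagonal k) ↔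
      ∀ r, h r = (R r 0 * k 0)⁻¹ ∧ k r = R⁻¹ r 0 * k 0 / R⁻¹ 0 0 := by
  simp only [Normalized, inv_diagonal_mul_mul_diagonal hh hk, diagonal_mul_mul_diagonal_apply,
    mul_mul_eq_one_iff_eq_inv (hR _) (hk 0),
    inv_mul_mul_inv_eq_inv_mul_mul_inv_iff (hk _) (hk 0) hR' (hh 0), forall_and]

theorem stmt11 {F : Type} [Field F] (d : ℕ)
    (R H K : Matrix (Fin (d+1)) (Fin (d+1)) F) (hR : Solid R)
    (hH : H.IsDiag) (hHu : IsUnit H) (hK : K.IsDiag) (hKu : IsUnit K) :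
    Normalized (H * R * K) ↔
      ∀ r : Fin (d+1),
        H r r = (R r 0 * K 0 0)⁻¹ ∧
        K r r = R⁻¹ r 0 * K 0 0 / R⁻¹ 0 0 := by
  obtain ⟨-, hR0, -, hR'0, -⟩ := hR
  conv_lhs => rw [← hH.diagonal_diag, ← hK.diagonal_diag]
  exact normalized_diagonal_mul_mul_diagonal_iff hR0 (hR'0 0) (hH.apply_ne_zero_of_isUnit hHu)
    (hK.apply_ne_zero_of_isUnit hKu)
end

section
/- Every diagonal equivalence class of solid invertible (d+1)×(d+1) matrices over F contains exactly one normalized matrix. That is: for each solid invertible R there exist invertible diagonal matrices H, K such that H R K is normalized, and if H' R K' is also normalized for invertible diagonal H', K', then H R K = H' R K'. -/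
open Matrix

private lemma diagUnit_ne {F : Type} [Field F] {d : ℕ} {v : Fin (d+1) → F}
    (hv : IsUnit (diagonal v)) (i : Fin (d+1)) : v i ≠ 0 := by
  intro h0
  obtain ⟨u, rfl⟩ := Matrix.isUnit_diagonal.mp hv
  have h1 : (↑u * ↑u⁻¹ : Fin (d+1) → F) i = 1 := by rw [u.mul_inv]; rfl
  rw [Pi.mul_apply, h0, zero_mul] at h1
  exact zero_ne_one h1

private lemma diagUnit_of_ne {F : Type} [Field F] {d : ℕ} {v : Fin (d+1) → F}
    (hv : ∀ i, v i ≠ 0) : IsUnit (diagonal v) :=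
  Matrix.isUnit_diagonal.mpr ⟨⟨v, fun i => (v i)⁻¹,
    funext fun i => mul_inv_cancel₀ (hv i), funext fun i => inv_mul_cancel₀ (hv i)⟩, rfl⟩

private lemma diag_inv {F : Type} [Field F] {d : ℕ} {v : Fin (d+1) → F}
    (hv : ∀ i, v i ≠ 0) : (diagonal v)⁻¹ = diagonal (fun i => (v i)⁻¹) := by
  apply Matrix.inv_eq_right_inv
  rw [diagonal_mul_diagonal]
  have : (fun i => v i * (v i)⁻¹) = fun _ => (1:F) := funext fun i => mul_inv_cancel₀ (hv i)
  rw [this]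
  exact diagonal_one

private lemma sand_apply {F : Type} [Field F] {d : ℕ} (R : Matrix (Fin (d+1)) (Fin (d+1)) F)
    (h k : Fin (d+1) → F) (i j : Fin (d+1)) :
    (diagonal h * R * diagonal k) i j = h i * R i j * k j := by
  simp [Matrix.diagonal_mul, Matrix.mul_diagonal]

private lemma sand_inv_apply {F : Type} [Field F] {d : ℕ} (R : Matrix (Fin (d+1)) (Fin (d+1)) F)
    {h k : Fin (d+1) → F} (hh : ∀ i, h i ≠ 0) (hk : ∀ i, k i ≠ 0) (i j : Fin (d+1)) :
    (diagonal h * R * diagonal k)⁻¹ i j = (k i)⁻¹ * R⁻¹ i j * (h j)⁻¹ := by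
  rw [Matrix.mul_inv_rev, Matrix.mul_inv_rev, diag_inv hh, diag_inv hk,
    Matrix.diagonal_mul, Matrix.mul_diagonal]
  ring

theorem stmt12 {F : Type} [Field F] (d : ℕ)
    (R : Matrix (Fin (d+1)) (Fin (d+1)) F) (hR : Solid R) :
    (∃ H K : Matrix (Fin (d+1)) (Fin (d+1)) F,
        H.IsDiag ∧ IsUnit H ∧ K.IsDiag ∧ IsUnit K ∧ Normalized (H * R * K)) ∧
    ∀ H K H' K' : Matrix (Fin (d+1)) (Fin (d+1)) F,
      H.IsDiag → IsUnit H → K.IsDiag → IsUnit K →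
      H'.IsDiag → IsUnit H' → K'.IsDiag → IsUnit K' →
      Normalized (H * R * K) → Normalized (H' * R * K') →
      H * R * K = H' * R * K' := by
  obtain ⟨hRu, hc, hr, hic, hir⟩ := hR
  constructor
  · -- existence
    set h : Fin (d+1) → F := fun i => (R i 0 * R⁻¹ 0 0)⁻¹ with hh_def
    set k : Fin (d+1) → F := fun i => R⁻¹ i 0 with hk_def
    have hh : ∀ i, h i ≠ 0 := fun i => inv_ne_zero (mul_ne_zero (hc i) (hic 0))
    have hk : ∀ i, k i ≠ 0 := fun i => hic i
    refine ⟨diagonal h, diagonal k, isDiag_diagonal h, diagUnit_of_ne hh,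
      isDiag_diagonal k, diagUnit_of_ne hk, ?_, ?_⟩
    · intro i
      rw [sand_apply]
      show (R i 0 * R⁻¹ 0 0)⁻¹ * (R i 0) * (R⁻¹ 0 0) = 1
      rw [mul_assoc]
      exact inv_mul_cancel₀ (mul_ne_zero (hc i) (hic 0))
    · intro i
      rw [sand_inv_apply R hh hk, sand_inv_apply R hh hk]
      show (R⁻¹ i 0)⁻¹ * R⁻¹ i 0 * (h 0)⁻¹ = (R⁻¹ 0 0)⁻¹ * R⁻¹ 0 0 * (h 0)⁻¹
      rw [inv_mul_cancel₀ (hic i), inv_mul_cancel₀ (hic 0)]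
  · -- uniqueness
    intro H K H' K' dH uH dK uK dH' uH' dK' uK' N N'
    rw [← dH.diagonal_diag] at uH N ⊢
    rw [← dK.diagonal_diag] at uK N ⊢
    rw [← dH'.diagonal_diag] at uH' N' ⊢
    rw [← dK'.diagonal_diag] at uK' N' ⊢
    set h := H.diag; set k := K.diag; set h' := H'.diag; set k' := K'.diag
    have hh := diagUnit_ne uH; have hk := diagUnit_ne uK
    have hh' := diagUnit_ne uH'; have hk' := diagUnit_ne uK'
    have hA : ∀ i, h i * R i 0 * k 0 = 1 := fun i => by
      have := N.1 i; rwa [sand_apply] at this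
    have hA' : ∀ i, h' i * R i 0 * k' 0 = 1 := fun i => by
      have := N'.1 i; rwa [sand_apply] at this
    have hB : ∀ j, k 0 * R⁻¹ j 0 = k j * R⁻¹ 0 0 := by
      intro j
      have t := N.2 j
      rw [sand_inv_apply R hh hk, sand_inv_apply R hh hk] at t
      have t2 := mul_right_cancel₀ (inv_ne_zero (hh 0)) t
      set a := R⁻¹ j 0 with ha; set b := R⁻¹ 0 0 with hb
      have hkj := hk j; have hk0 := hk 0
      field_simp at t2
      linear_combination t2
    have hB' : ∀ j, k' 0 * R⁻¹ j 0 = k' j * R⁻¹ 0 0 := by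
      intro j
      have t := N'.2 j
      rw [sand_inv_apply R hh' hk', sand_inv_apply R hh' hk'] at t
      have t2 := mul_right_cancel₀ (inv_ne_zero (hh' 0)) t
      set a := R⁻¹ j 0 with ha; set b := R⁻¹ 0 0 with hb
      have hkj := hk' j; have hk0 := hk' 0
      field_simp at t2
      linear_combination t2
    ext i j
    rw [sand_apply, sand_apply]
    have e1 : h i * k 0 = h' i * k' 0 := by
      apply mul_left_cancel₀ (hc i)
      linear_combination hA i - hA' i
    have key : h i * k j = h' i * k' j := by
      apply mul_right_cancel₀ (mul_ne_zero (hic 0) (hk' 0))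
      linear_combination (k' 0 * R⁻¹ j 0) * e1 - (h i * k' 0) * hB j
        + (h' i * k' 0) * hB' j
    linear_combination R i j * key
end
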